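/- Let H be an optimal Hermite Normal Form row basis of a full-rank integer lattice L ⊆ ℤ^N with D = det(L) ≥ 1, and let k ∈ ℕ satisfy 2^k ≥ N^{3/2} · D^{1/N}. Then there exists a nonzero coefficient vector x ∈ ℤ^N with −2^k ≤ x_i ≤ 2^k for all 1 ≤ i ≤ N, such that ‖x·H‖ = λ₁(L). In particular, such a k can be chosen with k + 1 ≤ ⌈1 + (3/2)·log₂ N + (1/N)·log₂ D⌉, so that N·(k+1) ≤ N·⌈1 + (3/2)·log₂ N + (1/N)·log₂ D⌉ binary-encoded qubits suffice to represent a shortest vector of L. -/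

import Mathlib

/-!
A vector `v` lies in the lattice of an optimal HNF basis exactly when
`v_N ≡ ∑_{j<N} v_j b_j (mod D)`. Pigeonhole over the box `{0, …, M}^N` with `M = ⌊D^{1/N}⌋`
therefore yields a nonzero lattice vector with all coordinates of size at most `M`, so a shortest
vector `v = x·H` has `|v_j| ≤ √N·M`. The first `N - 1` coefficients of `x` are coordinates of
`v`, and `x_N·D = v_N - ∑_{j<N} v_j b_j` with `0 ≤ b_j < D` gives
`|x_N| ≤ N·√N·M ≤ N^{3/2}·D^{1/N} ≤ 2^k`. The qubit count follows from
`k = ⌈log₂ (N^{3/2}·D^{1/N})⌉`.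
-/

open Matrix Real Finset

/-- The Euclidean norm of a vector in `ℝ^N`. -/
noncomputable def euclNorm {N : ℕ} (v : Fin N → ℝ) : ℝ := Real.sqrt (∑ i, v i ^ 2)

/-- `λ₁(L)` for the integer lattice `L = {x·H : x ∈ ℤ^N}` generated by the rows of
the integer matrix `H`: the minimum Euclidean norm of a nonzero lattice vector. -/
noncomputable def lambda1Int {N : ℕ} (H : Matrix (Fin N) (Fin N) ℤ) : ℝ :=
  sInf {r : ℝ | ∃ x : Fin N → ℤ, x ≠ 0 ∧ r = euclNorm (fun j => ((x ᵥ* H) j : ℝ))}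

namespace Matrix

variable {ι : Type*} [Fintype ι] {H : Matrix ι ι ℤ} {last : ι}

theorem vecMul_apply_of_ne_last (hdiag : ∀ i, i ≠ last → H i i = 1)
    (hoff : ∀ i j, i ≠ j → j ≠ last → H i j = 0) (x : ι → ℤ) {j : ι} (hj : j ≠ last) :
    (x ᵥ* H) j = x j := by
  rw [vecMul, dotProduct, sum_eq_single j (fun i _ hij => by rw [hoff i j hij hj, mul_zero])
    (by simp), hdiag j hj, mul_one]

variable [DecidableEq ι]

theorem vecMul_apply_last (x : ι → ℤ) :
    (x ᵥ* H) last = ∑ j ∈ univ.erase last, x j * H j last + x last * H last last :=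
  (sum_erase_add _ _ (mem_univ last)).symm

variable (H last) in
def hnfResidue : (ι → ℤ) →+ ℤ :=
  AddMonoidHom.mk' (fun v => v last - ∑ j ∈ univ.erase last, v j * H j last) fun v w => by
    simp only [Pi.add_apply, add_mul, sum_add_distrib]
    ring

theorem hnfResidue_apply (v : ι → ℤ) :
    hnfResidue H last v = v last - ∑ j ∈ univ.erase last, v j * H j last := rfl

theorem exists_vecMul_eq_of_dvd_hnfResidue (hdiag : ∀ i, i ≠ last → H i i = 1)
    (hoff : ∀ i j, i ≠ j → j ≠ last → H i j = 0) {v : ι → ℤ}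
    (hv : H last last ∣ hnfResidue H last v) : ∃ x, x ᵥ* H = v := by
  obtain ⟨c, hc⟩ := hv
  refine ⟨Function.update v last c, funext fun j => ?_⟩
  by_cases hj : j = last
  · subst hj
    rw [hnfResidue_apply] at hc
    rw [vecMul_apply_last, Function.update_self,
      sum_congr rfl fun i hi => by rw [Function.update_of_ne (ne_of_mem_erase hi)]]
    linarith
  · rw [vecMul_apply_of_ne_last hdiag hoff _ hj, Function.update_of_ne hj]

theorem hnfResidue_vecMul (hdiag : ∀ i, i ≠ last → H i i = 1)
    (hoff : ∀ i j, i ≠ j → j ≠ last → H i j = 0) (x : ι → ℤ) :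
    hnfResidue H last (x ᵥ* H) = x last * H last last := by
  rw [hnfResidue_apply,
    sum_congr rfl fun j hj => by rw [vecMul_apply_of_ne_last hdiag hoff x (ne_of_mem_erase hj)],
    vecMul_apply_last]
  ring

theorem abs_hnfResidue_le (hcol : ∀ j, j ≠ last → |H j last| ≤ H last last)
    (hpos : 0 < H last last) {v : ι → ℤ} {B : ℝ} (hB : ∀ j, |(v j : ℝ)| ≤ B) :
    |(hnfResidue H last v : ℝ)| ≤ Fintype.card ι * B * H last last := by
  have hd : (1 : ℝ) ≤ H last last := by exact_mod_cast hpos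
  have hterm : ∀ j ∈ univ.erase last, |(v j : ℝ) * H j last| ≤ B * H last last := fun j hj => by
    rw [abs_mul]
    exact mul_le_mul (hB j) (by exact_mod_cast hcol j (ne_of_mem_erase hj)) (abs_nonneg _)
      ((abs_nonneg _).trans (hB j))
  have hcard : ((univ.erase last).card + 1 : ℝ) = Fintype.card ι := by
    exact_mod_cast card_erase_add_one (mem_univ last)
  calc |(hnfResidue H last v : ℝ)|
      = |(v last : ℝ) - ∑ j ∈ univ.erase last, (v j : ℝ) * H j last| := by
        rw [hnfResidue_apply]; push_cast; rfl
    _ ≤ |(v last : ℝ)| + ∑ j ∈ univ.erase last, |(v j : ℝ) * H j last| :=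
        (abs_sub _ _).trans (by gcongr; exact abs_sum_le_sum_abs _ _)
    _ ≤ B * H last last + (univ.erase last).card * (B * H last last) := by
        gcongr
        · exact (hB last).trans (le_mul_of_one_le_right ((abs_nonneg _).trans (hB last)) hd)
        · simpa using sum_le_sum hterm
    _ = Fintype.card ι * B * H last last := by rw [← hcard]; ring

theorem abs_le_card_mul_of_abs_vecMul_le (hdiag : ∀ i, i ≠ last → H i i = 1)
    (hoff : ∀ i j, i ≠ j → j ≠ last → H i j = 0)
    (hcol : ∀ j, j ≠ last → |H j last| ≤ H last last) (hpos : 0 < H last last)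
    {x : ι → ℤ} {B : ℝ} (hB : ∀ j, |((x ᵥ* H) j : ℝ)| ≤ B) (i : ι) :
    |(x i : ℝ)| ≤ Fintype.card ι * B := by
  have hB0 : 0 ≤ B := (abs_nonneg _).trans (hB i)
  by_cases hi : i = last
  · subst hi
    have hd : (0 : ℝ) < H i i := by exact_mod_cast hpos
    have h := abs_hnfResidue_le hcol hpos hB
    rw [hnfResidue_vecMul hdiag hoff, Int.cast_mul, abs_mul, abs_of_pos hd] at h
    exact le_of_mul_le_mul_right h hd
  · have hcard : (1 : ℝ) ≤ Fintype.card ι := Nat.one_le_cast.2 (Fintype.card_pos_iff.2 ⟨i⟩)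
    rw [← vecMul_apply_of_ne_last hdiag hoff x hi]
    exact (hB i).trans (le_mul_of_one_le_left hB0 hcard)

end Matrix

theorem exists_ne_zero_abs_le_and_dvd_of_lt_pow {ι : Type*} [Fintype ι] [DecidableEq ι]
    (f : (ι → ℤ) →+ ℤ) {D : ℤ} (hD : 0 < D) {M : ℕ} (hDM : D < ((M : ℤ) + 1) ^ Fintype.card ι) :
    ∃ u : ι → ℤ, u ≠ 0 ∧ D ∣ f u ∧ ∀ i, |u i| ≤ M := by
  let box : (ι → Fin (M + 1)) → ι → ℤ := fun v i => (v i : ℕ)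
  have hcard : (Ico 0 D).card < (univ : Finset (ι → Fin (M + 1))).card := by
    rw [Int.card_Ico, card_univ, Fintype.card_fun, Fintype.card_fin, sub_zero]
    have : (D.toNat : ℤ) < ((M + 1) ^ Fintype.card ι : ℕ) := by
      push_cast
      rwa [Int.toNat_of_nonneg hD.le]
    exact_mod_cast this
  obtain ⟨v, -, w, -, hvw, hmod⟩ := exists_ne_map_eq_of_card_lt_of_maps_to hcard
    (f := fun v => f (box v) % D) fun v _ => by
      simpa using ⟨Int.emod_nonneg _ hD.ne', Int.emod_lt_of_pos _ hD⟩
  refine ⟨box v - box w, fun h => hvw (funext fun i => Fin.ext ?_), ?_, fun i => ?_⟩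
  · simpa [box, sub_eq_zero] using congrFun h i
  · rw [map_sub]
    exact (Int.ModEq.dvd hmod.symm)
  · have := (v i).isLt
    have := (w i).isLt
    simp only [Pi.sub_apply, box, abs_le]
    omega

section EuclNorm

variable {N : ℕ}

theorem abs_le_euclNorm (v : Fin N → ℝ) (j : Fin N) : |v j| ≤ euclNorm v :=
  Real.abs_le_sqrt (single_le_sum (f := fun i => v i ^ 2) (fun _ _ => sq_nonneg _) (mem_univ j))

theorem euclNorm_le_of_abs_le {v : Fin N → ℝ} {M : ℝ} (hv : ∀ i, |v i| ≤ M) :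
    euclNorm v ≤ √N * M := by
  rcases N.eq_zero_or_pos with rfl | hN
  · simp [euclNorm]
  have hM : 0 ≤ M := (abs_nonneg _).trans (hv ⟨0, hN⟩)
  calc euclNorm v ≤ √(∑ _i : Fin N, M ^ 2) :=
        Real.sqrt_le_sqrt (sum_le_sum fun i _ => sq_le_sq' (abs_le.1 (hv i)).1 (abs_le.1 (hv i)).2)
    _ = √N * M := by
        rw [sum_const, card_univ, Fintype.card_fin, nsmul_eq_mul, Real.sqrt_mul (Nat.cast_nonneg _),
          Real.sqrt_sq hM]

theorem euclNorm_intCast (y : Fin N → ℤ) :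
    euclNorm (fun j => (y j : ℝ)) = √((∑ j, (y j).natAbs ^ 2 : ℕ) : ℝ) := by
  simp [euclNorm, Nat.cast_natAbs, sq_abs]

theorem lambda1Int_le_euclNorm (H : Matrix (Fin N) (Fin N) ℤ) {x : Fin N → ℤ} (hx : x ≠ 0) :
    lambda1Int H ≤ euclNorm (fun j => ((x ᵥ* H) j : ℝ)) :=
  csInf_le ⟨0, by rintro r ⟨y, -, rfl⟩; exact Real.sqrt_nonneg _⟩ ⟨x, hx, rfl⟩

/-- The squared norms of lattice vectors are natural numbers, so the infimum is attained. -/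
theorem exists_euclNorm_vecMul_eq_lambda1Int (H : Matrix (Fin N) (Fin N) ℤ) (hN : 0 < N) :
    ∃ x : Fin N → ℤ, x ≠ 0 ∧ euclNorm (fun j => ((x ᵥ* H) j : ℝ)) = lambda1Int H := by
  let sqNorms : Set ℕ := {n | ∃ x : Fin N → ℤ, x ≠ 0 ∧ n = ∑ j, ((x ᵥ* H) j).natAbs ^ 2}
  have hne : sqNorms.Nonempty := ⟨_, Pi.single ⟨0, hN⟩ 1, by simp, rfl⟩
  obtain ⟨x, hx, hmin⟩ := Nat.sInf_mem hne
  have hleast : IsLeast {r : ℝ | ∃ x : Fin N → ℤ, x ≠ 0 ∧ r = euclNorm (fun j => ((x ᵥ* H) j : ℝ))}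
      (euclNorm (fun j => ((x ᵥ* H) j : ℝ))) := by
    refine ⟨⟨x, hx, rfl⟩, ?_⟩
    rintro r ⟨y, hy, rfl⟩
    rw [euclNorm_intCast, euclNorm_intCast, ← hmin]
    gcongr
    exact Nat.sInf_le ⟨y, hy, rfl⟩
  exact ⟨x, hx, hleast.csInf_eq.symm⟩

end EuclNorm

theorem lt_floor_rpow_inv_add_one_pow {x : ℝ} (hx : 0 ≤ x) {n : ℕ} (hn : n ≠ 0) :
    x < (⌊x ^ ((1 : ℝ) / n)⌋₊ + 1 : ℝ) ^ n := by
  calc x = (x ^ ((1 : ℝ) / n)) ^ n := by rw [one_div, Real.rpow_inv_natCast_pow hx hn]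
    _ < (⌊x ^ ((1 : ℝ) / n)⌋₊ + 1 : ℝ) ^ n :=
        pow_lt_pow_left₀ (Nat.lt_floor_add_one _) (by positivity) hn

theorem exists_le_two_pow_and_succ_le_ceil_one_add_logb {y : ℝ} (hy : 1 ≤ y) :
    ∃ k : ℕ, y ≤ 2 ^ k ∧ (k + 1 : ℤ) ≤ ⌈1 + Real.logb 2 y⌉ := by
  have hlog : 0 ≤ Real.logb 2 y := Real.logb_nonneg one_lt_two hy
  refine ⟨⌈Real.logb 2 y⌉₊, ?_, ?_⟩
  · rw [← Real.rpow_natCast, ← Real.logb_le_iff_le_rpow one_lt_two (by positivity)]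
    exact Nat.le_ceil _
  · rw [Int.ceil_one_add, Int.natCast_ceil_eq_ceil hlog, add_comm]

theorem exists_vecMul_eq_lambda1Int_abs_le {N : ℕ} {H : Matrix (Fin N) (Fin N) ℤ}
    {last : Fin N} (hdiag : ∀ i, i ≠ last → H i i = 1)
    (hoff : ∀ i j, i ≠ j → j ≠ last → H i j = 0)
    (hcol : ∀ j, j ≠ last → |H j last| ≤ H last last) (hpos : 0 < H last last) :
    ∃ x : Fin N → ℤ, x ≠ 0 ∧ euclNorm (fun j => ((x ᵥ* H) j : ℝ)) = lambda1Int H ∧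
      ∀ i, |(x i : ℝ)| ≤ N * (√N * ⌊(H last last : ℝ) ^ ((1 : ℝ) / N)⌋₊) := by
  set M := ⌊(H last last : ℝ) ^ ((1 : ℝ) / N)⌋₊
  have hN : 0 < N := last.pos
  have hDM : H last last < ((M : ℤ) + 1) ^ Fintype.card (Fin N) := by
    rw [Fintype.card_fin]
    exact_mod_cast lt_floor_rpow_inv_add_one_pow (by exact_mod_cast hpos.le : (0 : ℝ) ≤ H last last)
      hN.ne'
  obtain ⟨_, hu0, hudvd, hub⟩ :=
    exists_ne_zero_abs_le_and_dvd_of_lt_pow (hnfResidue H last) hpos hDM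
  obtain ⟨y, rfl⟩ := exists_vecMul_eq_of_dvd_hnfResidue hdiag hoff hudvd
  obtain ⟨x, hx0, hxmin⟩ := exists_euclNorm_vecMul_eq_lambda1Int H hN
  have hshort : euclNorm (fun j => ((x ᵥ* H) j : ℝ)) ≤ √N * M := by
    rw [hxmin]
    refine (lambda1Int_le_euclNorm H (x := y) fun hy => hu0 (by rw [hy, zero_vecMul])).trans ?_
    exact euclNorm_le_of_abs_le fun i => by exact_mod_cast hub i
  refine ⟨x, hx0, hxmin, ?_⟩
  simpa using abs_le_card_mul_of_abs_vecMul_le hdiag hoff hcol hpos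
    fun j => (abs_le_euclNorm _ j).trans hshort

theorem natCast_mul_sqrt_mul_floor_rpow_le (N : ℕ) {d : ℝ} (hd : 0 ≤ d) :
    N * (√N * ⌊d ^ ((1 : ℝ) / N)⌋₊) ≤ (N : ℝ) ^ ((3 : ℝ) / 2) * d ^ ((1 : ℝ) / N) := by
  have h32 : (N : ℝ) ^ ((3 : ℝ) / 2) = N * √N := by
    rw [Real.sqrt_eq_rpow, ← Real.rpow_one_add' (by positivity) (by norm_num)]
    norm_num
  rw [h32, mul_assoc]
  gcongr
  exact Nat.floor_le (by positivity)

theorem hnf_shortest_vector_binary_qubits_general (N : ℕ) (D : ℤ) (hD : 1 ≤ D)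
    (H : Matrix (Fin N) (Fin N) ℤ)
    (lastIdx : Fin N)
    (hdiag : ∀ i : Fin N, i ≠ lastIdx → H i i = 1)
    (hDD : H lastIdx lastIdx = D)
    (hoff : ∀ i j : Fin N, i ≠ j → j ≠ lastIdx → H i j = 0)
    (hcol : ∀ i : Fin N, i ≠ lastIdx → 0 ≤ H i lastIdx ∧ H i lastIdx < D)
    (k : ℕ)
    (hk : (N : ℝ) ^ ((3 : ℝ) / 2) * (D : ℝ) ^ ((1 : ℝ) / N) ≤ (2 : ℝ) ^ k) :
    (∃ x : Fin N → ℤ, x ≠ 0 ∧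
      (∀ i : Fin N, -(2 ^ k : ℤ) ≤ x i ∧ x i ≤ 2 ^ k) ∧
      euclNorm (fun j => ((x ᵥ* H) j : ℝ)) = lambda1Int H) ∧
    (∃ k' : ℕ,
      (N : ℝ) ^ ((3 : ℝ) / 2) * (D : ℝ) ^ ((1 : ℝ) / N) ≤ (2 : ℝ) ^ k' ∧
      (k' + 1 : ℤ) ≤
        ⌈(1 : ℝ) + (3 / 2) * Real.logb 2 N + (1 / N) * Real.logb 2 D⌉ ∧
      (N * (k' + 1) : ℤ) ≤
        N * ⌈(1 : ℝ) + (3 / 2) * Real.logb 2 N + (1 / N) * Real.logb 2 D⌉) := by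
  have hcol' : ∀ j, j ≠ lastIdx → |H j lastIdx| ≤ H lastIdx lastIdx := fun j hj => by
    rw [hDD, abs_of_nonneg (hcol j hj).1]
    exact (hcol j hj).2.le
  obtain ⟨x, hx0, hxmin, hxbound⟩ :=
    exists_vecMul_eq_lambda1Int_abs_le hdiag hoff hcol' (by omega)
  refine ⟨⟨x, hx0, fun i => ?_, hxmin⟩, ?_⟩
  · rw [hDD] at hxbound
    have hbox := ((hxbound i).trans (natCast_mul_sqrt_mul_floor_rpow_le N
      (by exact_mod_cast (by omega : (0 : ℤ) ≤ D)))).trans hk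
    rw [abs_le] at hbox
    exact ⟨by exact_mod_cast hbox.1, by exact_mod_cast hbox.2⟩
  · have hNR : (1 : ℝ) ≤ N := by exact_mod_cast lastIdx.pos
    have hDR : (1 : ℝ) ≤ D := by exact_mod_cast hD
    obtain ⟨k', hk', hk'D⟩ := exists_le_two_pow_and_succ_le_ceil_one_add_logb
      (y := (N : ℝ) ^ ((3 : ℝ) / 2) * (D : ℝ) ^ ((1 : ℝ) / N))
      (one_le_mul_of_one_le_of_one_le (Real.one_le_rpow hNR (by norm_num))
        (Real.one_le_rpow hDR (by positivity)))
    rw [Real.logb_mul (by positivity) (by positivity),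
      Real.logb_rpow_eq_mul_logb_of_pos (by positivity),
      Real.logb_rpow_eq_mul_logb_of_pos (by positivity), ← add_assoc] at hk'D
    exact ⟨k', hk', hk'D, mul_le_mul_of_nonneg_left hk'D (by positivity)⟩

/-- for an optimal HNF row basis `H` of a full-rank integer lattice with
determinant `D ≥ 1` and any `k ∈ ℕ` with `2^k ≥ N^{3/2}·D^{1/N}`, a shortest vector of
the lattice is represented by a nonzero coefficient vector with every coefficient in
`[-2^k, 2^k]`.  Moreover such a `k` can be chosen with
`k + 1 ≤ ⌈1 + (3/2)·log₂ N + (1/N)·log₂ D⌉`, so that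
`N·(k+1) ≤ N·⌈1 + (3/2)·log₂ N + (1/N)·log₂ D⌉` binary-encoded qubits suffice. -/
theorem hnf_shortest_vector_binary_qubits (N : ℕ) (hN : 0 < N) (D : ℤ) (hD : 1 ≤ D)
    (H : Matrix (Fin N) (Fin N) ℤ)
    (lastIdx : Fin N) (hlast : (lastIdx : ℕ) = N - 1)
    (hdet : H.det = D)
    (hdiag : ∀ i : Fin N, i ≠ lastIdx → H i i = 1)
    (hDD : H lastIdx lastIdx = D)
    (hoff : ∀ i j : Fin N, i ≠ j → j ≠ lastIdx → H i j = 0)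
    (hcol : ∀ i : Fin N, i ≠ lastIdx → 0 ≤ H i lastIdx ∧ H i lastIdx < D)
    (k : ℕ)
    (hk : (N : ℝ) ^ ((3 : ℝ) / 2) * (D : ℝ) ^ ((1 : ℝ) / N) ≤ (2 : ℝ) ^ k) :
    (∃ x : Fin N → ℤ, x ≠ 0 ∧
      (∀ i : Fin N, -(2 ^ k : ℤ) ≤ x i ∧ x i ≤ 2 ^ k) ∧
      euclNorm (fun j => ((x ᵥ* H) j : ℝ)) = lambda1Int H) ∧
    (∃ k' : ℕ,
      (N : ℝ) ^ ((3 : ℝ) / 2) * (D : ℝ) ^ ((1 : ℝ) / N) ≤ (2 : ℝ) ^ k' ∧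
      (k' + 1 : ℤ) ≤
        ⌈(1 : ℝ) + (3 / 2) * Real.logb 2 N + (1 / N) * Real.logb 2 D⌉ ∧
      (N * (k' + 1) : ℤ) ≤
        N * ⌈(1 : ℝ) + (3 / 2) * Real.logb 2 N + (1 / N) * Real.logb 2 D⌉) :=
  hnf_shortest_vector_binary_qubits_general N D hD H lastIdx hdiag hDD hoff hcol k hk
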